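/- arXiv:2405.10273 — 3 statements merged into one kernel-verified Lean document; each statement's English description precedes it below -/
import Mathlib

section
/- Let (Ω,d) be a bounded minimally nice metric space whose metric completion Ω̄^d is compact, and suppose (Ω,d) is quasihyperbolically visible. If γ : [0,∞) → (Ω,k_Ω) is a quasihyperbolic geodesic ray, then for every sequence t_n → ∞ the limit lim_{n→∞} γ(t_n) exists in the metric d (and lies in ∂_dΩ). -/
open Set Filter Metric Topology UniformConvergence ENNReal

noncomputable section

variable {Ω : Type*} [MetricSpace Ω]

/-- The metric boundary `∂_dΩ` of a metric space `Ω`: the complement of (the image of) `Ω`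
in its metric completion `Ω̄^d`. -/
def metricBoundary (Ω : Type*) [MetricSpace Ω] : Set (UniformSpace.Completion Ω) :=
  (Set.range ((↑) : Ω → UniformSpace.Completion Ω))ᶜ

/-- `δ_Ω(z)`: the distance from `z ∈ Ω` to the metric boundary `∂_dΩ`. -/
def deltaOmega (z : Ω) : ℝ :=
  Metric.infDist ((z : UniformSpace.Completion Ω)) (metricBoundary Ω)

/-- A rectifiable curve in `Ω`, defined on `[a,b]`, joining `x` to `y`. -/
def IsCurveIn (γ : ℝ → Ω) (a b : ℝ) (x y : Ω) : Prop :=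
  a ≤ b ∧ ContinuousOn γ (Set.Icc a b) ∧ γ a = x ∧ γ b = y ∧
    eVariationOn γ (Set.Icc a b) ≠ ⊤

/-- The `d`-arclength function `t ↦ ℓ_d(γ|_{[a,t]})` of a curve `γ` on `[a,b]` (clamped). -/
def arcLengthFun (γ : ℝ → Ω) (a b : ℝ) : ℝ → ℝ :=
  fun t => (eVariationOn γ (Set.Icc a (max a (min t b)))).toReal

theorem arcLengthFun_monotone {γ : ℝ → Ω} {a b : ℝ} (hab : a ≤ b)
    (hrect : eVariationOn γ (Set.Icc a b) ≠ ⊤) : Monotone (arcLengthFun γ a b) := by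
  intro s t hst
  apply ENNReal.toReal_mono
  · exact ne_top_of_le_ne_top hrect
      (eVariationOn.mono γ (Set.Icc_subset_Icc_right (max_le hab (min_le_right _ _))))
  · exact eVariationOn.mono γ (Set.Icc_subset_Icc_right
      (max_le_max le_rfl (min_le_min hst le_rfl)))

/-- The quasihyperbolic length `ℓ_k(γ) = ∫_γ |dz| / δ_Ω(z)` of a rectifiable curve
`γ : [a,b] → Ω`: the Lebesgue–Stieltjes integral of `1/δ_Ω(γ(t))` with respect to the
arclength function of `γ`.  (Non-rectifiable "curves" get length `⊤`.) -/
def qhLength (γ : ℝ → Ω) (a b : ℝ) : ℝ≥0∞ :=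
  if h : a ≤ b ∧ eVariationOn γ (Set.Icc a b) ≠ ⊤ then
    ∫⁻ t in Set.Icc a b, ENNReal.ofReal (1 / deltaOmega (γ t))
      ∂(arcLengthFun_monotone h.1 h.2).stieltjesFunction.measure
  else ⊤

/-- The quasihyperbolic distance (as an extended real): the infimum of the quasihyperbolic
lengths of rectifiable curves in `Ω` joining `x` to `y`. -/
def qhEDist (x y : Ω) : ℝ≥0∞ :=
  ⨅ (γ : ℝ → Ω) (a : ℝ) (b : ℝ) (_ : IsCurveIn γ a b x y), qhLength γ a b

/-- The quasihyperbolic metric `k_Ω`. -/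
def qhDist (x y : Ω) : ℝ :=
  (qhEDist x y).toReal

/-- The inner (length) metric `λ_Ω` associated to `(Ω,d)`, as an extended real. -/
def innerEDist (x y : Ω) : ℝ≥0∞ :=
  ⨅ (γ : ℝ → Ω) (a : ℝ) (b : ℝ) (_ : IsCurveIn γ a b x y), eVariationOn γ (Set.Icc a b)

/-- `(Ω,d)` is minimally nice: rectifiably connected, locally compact, non-complete, and the
identity map from `(Ω,d)` to `(Ω,λ_Ω)` is continuous. -/
structure MinimallyNice (Ω : Type*) [MetricSpace Ω] : Prop where
  rectifiablyConnected : ∀ x y : Ω, ∃ (γ : ℝ → Ω) (a b : ℝ), IsCurveIn γ a b x y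
  locallyCompact : LocallyCompactSpace Ω
  nonComplete : ¬ CompleteSpace Ω
  idContinuous : ∀ x : Ω, Filter.Tendsto (fun y => innerEDist x y) (nhds x) (nhds 0)

/-- `γ` is a geodesic of the quasihyperbolic metric on the parameter set `s`
(parametrized by `k_Ω`-arclength). -/
def IsQHGeodesicOn (γ : ℝ → Ω) (s : Set ℝ) : Prop :=
  ∀ ⦃u⦄, u ∈ s → ∀ ⦃v⦄, v ∈ s → qhDist (γ u) (γ v) = |u - v|

/-- A quasihyperbolic geodesic segment from `x` to `y`. -/
def IsQHGeodesicSeg (γ : ℝ → Ω) (a b : ℝ) (x y : Ω) : Prop :=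
  a ≤ b ∧ γ a = x ∧ γ b = y ∧ IsQHGeodesicOn γ (Set.Icc a b)

/-- A quasihyperbolic geodesic ray `γ : [0,∞) → (Ω, k_Ω)`. -/
def IsQHGeodesicRay (γ : ℝ → Ω) : Prop :=
  IsQHGeodesicOn γ (Set.Ici 0)

/-- A quasihyperbolic geodesic line `γ : (-∞,∞) → (Ω, k_Ω)`. -/
def IsQHGeodesicLine (γ : ℝ → Ω) : Prop :=
  IsQHGeodesicOn γ Set.univ

/-- `(Ω,d)` is quasihyperbolically visible: for every pair of distinct points `p,q` of the
metric boundary there is a compact set `K ⊆ Ω` such that for all sequences `xₙ → p`, `yₙ → q`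
(in the metric `d`), every quasihyperbolic geodesic joining `xₙ` and `yₙ` meets `K`. -/
def QHVisible (Ω : Type*) [MetricSpace Ω] : Prop :=
  ∀ p q : UniformSpace.Completion Ω, p ∈ metricBoundary Ω → q ∈ metricBoundary Ω → p ≠ q →
    ∃ K : Set Ω, IsCompact K ∧
      ∀ x y : ℕ → Ω,
        Filter.Tendsto (fun n => ((x n : Ω) : UniformSpace.Completion Ω))
          Filter.atTop (nhds p) →
        Filter.Tendsto (fun n => ((y n : Ω) : UniformSpace.Completion Ω))
          Filter.atTop (nhds q) →
        ∀ (n : ℕ) (γ : ℝ → Ω) (a b : ℝ), IsQHGeodesicSeg γ a b (x n) (y n) →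
          ∃ t ∈ Set.Icc a b, γ t ∈ K

/-- `(Ω, k_Ω)` is Gromov hyperbolic: there is `δ ≥ 0` such that every quasihyperbolic
geodesic triangle is `δ`-thin. -/
def QHGromovHyperbolic (Ω : Type*) [MetricSpace Ω] : Prop :=
  ∃ δ : ℝ, 0 ≤ δ ∧
    ∀ (x y z : Ω) (γ₁ γ₂ γ₃ : ℝ → Ω) (a₁ b₁ a₂ b₂ a₃ b₃ : ℝ),
      IsQHGeodesicSeg γ₁ a₁ b₁ x y → IsQHGeodesicSeg γ₂ a₂ b₂ y z →
      IsQHGeodesicSeg γ₃ a₃ b₃ x z →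
      ∀ t ∈ Set.Icc a₁ b₁,
        ∃ u, (u ∈ Set.Icc a₂ b₂ ∧ qhDist (γ₁ t) (γ₂ u) ≤ δ) ∨
             (u ∈ Set.Icc a₃ b₃ ∧ qhDist (γ₁ t) (γ₃ u) ≤ δ)

/-- `(Ω,d)` is quasiconvex: some `A ≥ 1` so that every two points are joined by a curve of
`d`-length at most `A·d(x,y)`. -/
def QuasiconvexSpace (Ω : Type*) [MetricSpace Ω] : Prop :=
  ∃ A : ℝ, 1 ≤ A ∧ ∀ x y : Ω, ∃ (γ : ℝ → Ω) (a b : ℝ), IsCurveIn γ a b x y ∧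
    eVariationOn γ (Set.Icc a b) ≤ ENNReal.ofReal (A * dist x y)

/-- The Gehring–Hayman theorem holds in `(Ω,d)`: quasihyperbolic geodesics are essentially
the shortest curves, up to a multiplicative constant `C ≥ 1`. -/
def GehringHayman (Ω : Type*) [MetricSpace Ω] : Prop :=
  ∃ C : ℝ, 1 ≤ C ∧ ∀ x y : Ω, ∀ (γ : ℝ → Ω) (a b : ℝ), IsQHGeodesicSeg γ a b x y →
    ∀ (σ : ℝ → Ω) (a' b' : ℝ), IsCurveIn σ a' b' x y →
      eVariationOn γ (Set.Icc a b) ≤ ENNReal.ofReal C * eVariationOn σ (Set.Icc a' b')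

/-! Near any point `z ∈ Ω` two points can be joined, through `z`, by a short curve staying a
fixed distance away from the boundary, so `k_Ω` is bounded by `1` on a neighbourhood of `z`.
A geodesic ray, along which `k_Ω` grows linearly, therefore has no cluster point in `Ω`: it
leaves every compact set, and every subsequential limit of `γ(tₙ)` in the compact completion
lies on `∂_dΩ`. If two of them differed, visibility would give a compact `K` met by the
subsegments of `γ` joining far-out points of the two subsequences, i.e. `γ` would meet `K` at
arbitrarily large times. -/

open UniformSpace MeasureTheory

theorem metricBoundary_nonempty (hΩ : ¬ CompleteSpace Ω) : (metricBoundary Ω).Nonempty := by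
  refine Set.nonempty_compl.2 fun hrange => hΩ ?_
  rw [completeSpace_iff_isComplete_range (Completion.isUniformInducing_coe Ω), hrange]
  exact isComplete_univ

theorem deltaOmega_pos [LocallyCompactSpace Ω] (hΩ : ¬ CompleteSpace Ω) (z : Ω) :
    0 < deltaOmega z := by
  obtain ⟨K, hK, hKz⟩ := exists_compact_mem_nhds z
  -- In the completion, the closure of the image of a neighbourhood of `z` is a neighbourhood
  -- of `z`; for compact `K` that closure is the image itself, which misses the boundary.
  have hrange : Set.range ((↑) : Ω → Completion Ω) ∈ 𝓝 (z : Completion Ω) := by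
    have := (Completion.isDenseInducing_coe (α := Ω)).closure_image_mem_nhds hKz
    rw [(hK.image (Completion.continuous_coe Ω)).isClosed.closure_eq] at this
    exact mem_of_superset this (Set.image_subset_range _ _)
  rw [deltaOmega, ← Metric.infDist_pos_iff_notMem_closure (metricBoundary_nonempty hΩ),
    metricBoundary, closure_compl, Set.notMem_compl_iff, mem_interior_iff_mem_nhds]
  exact hrange

theorem deltaOmega_le_add_dist (z w : Ω) : deltaOmega z ≤ deltaOmega w + dist z w := by
  simpa only [deltaOmega, Completion.dist_eq] using
    Metric.infDist_le_infDist_add_dist (x := (z : Completion Ω)) (y := (w : Completion Ω))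

theorem eVariationOn_reverse_Icc {E : Type*} [PseudoEMetricSpace E] (f : ℝ → E) (a b : ℝ) :
    eVariationOn (fun s => f (a + b - s)) (Icc a b) = eVariationOn f (Icc a b) := by
  have := eVariationOn.comp_eq_of_antitoneOn f (fun s => a + b - s) (t := Icc a b)
    fun _ _ _ _ h => sub_le_sub_left h _
  rwa [Set.image_const_sub_Icc, add_sub_cancel_left, add_sub_cancel_right] at this

theorem eVariationOn_shift_Icc {E : Type*} [PseudoEMetricSpace E] (f : ℝ → E) (a b h : ℝ) :
    eVariationOn (fun s => f (s - h)) (Icc (a + h) (b + h)) = eVariationOn f (Icc a b) := by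
  have := eVariationOn.comp_eq_of_monotoneOn f (fun s => s - h) (t := Icc (a + h) (b + h))
    fun _ _ _ _ h => sub_le_sub_right h _
  rwa [Set.image_sub_const_Icc, add_sub_cancel_right, add_sub_cancel_right] at this

namespace IsCurveIn

variable {σ σ₁ σ₂ : ℝ → Ω} {a b c : ℝ} {x y z : Ω}

theorem dist_le (hσ : IsCurveIn σ a b x y) {s : ℝ} (hs : s ∈ Icc a b) :
    dist (σ s) x ≤ (eVariationOn σ (Icc a b)).toReal := by
  rw [dist_edist, ← hσ.2.2.1]
  exact ENNReal.toReal_mono hσ.2.2.2.2 (eVariationOn.edist_le σ hs (left_mem_Icc.2 hσ.1))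

theorem reverse (hσ : IsCurveIn σ a b x y) : IsCurveIn (fun s => σ (a + b - s)) a b y x := by
  obtain ⟨hab, hcont, hx, hy, hvar⟩ := hσ
  refine ⟨hab, hcont.comp (by fun_prop) fun s hs => ⟨?_, ?_⟩, ?_, ?_,
    (eVariationOn_reverse_Icc σ a b).symm ▸ hvar⟩
  · linarith [hs.2]
  · linarith [hs.1]
  · dsimp only; rwa [add_sub_cancel_left]
  · dsimp only; rwa [add_sub_cancel_right]

theorem shift (hσ : IsCurveIn σ a b x y) (h : ℝ) :
    IsCurveIn (fun s => σ (s - h)) (a + h) (b + h) x y := by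
  obtain ⟨hab, hcont, hx, hy, hvar⟩ := hσ
  refine ⟨by linarith, hcont.comp (by fun_prop) fun s hs => ⟨?_, ?_⟩, ?_, ?_,
    (eVariationOn_shift_Icc σ a b h).symm ▸ hvar⟩
  · linarith [hs.1]
  · linarith [hs.2]
  · dsimp only; rwa [add_sub_cancel_right]
  · dsimp only; rwa [add_sub_cancel_right]

theorem eqOn_glue_right (h₁ : IsCurveIn σ₁ a b x y) (h₂ : IsCurveIn σ₂ b c y z) :
    EqOn (fun s => if s ≤ b then σ₁ s else σ₂ s) σ₂ (Icc b c) := by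
  intro s hs
  by_cases hsb : s ≤ b
  · obtain rfl : s = b := le_antisymm hsb hs.1
    simp only [le_refl, if_true, h₁.2.2.2.1, h₂.2.2.1]
  · simp only [hsb, if_false]

theorem eVariationOn_glue (h₁ : IsCurveIn σ₁ a b x y) (h₂ : IsCurveIn σ₂ b c y z) :
    eVariationOn (fun s => if s ≤ b then σ₁ s else σ₂ s) (Icc a c) =
      eVariationOn σ₁ (Icc a b) + eVariationOn σ₂ (Icc b c) := by
  have hleft : EqOn (fun s => if s ≤ b then σ₁ s else σ₂ s) σ₁ (Icc a b) :=
    fun s hs => if_pos hs.2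
  have := eVariationOn.Icc_add_Icc (fun s => if s ≤ b then σ₁ s else σ₂ s) h₁.1 h₂.1
    (Set.mem_univ b)
  simp only [Set.univ_inter] at this
  rw [← this, eVariationOn.eq_of_eqOn hleft, eVariationOn.eq_of_eqOn (eqOn_glue_right h₁ h₂)]

theorem glue (h₁ : IsCurveIn σ₁ a b x y) (h₂ : IsCurveIn σ₂ b c y z) :
    IsCurveIn (fun s => if s ≤ b then σ₁ s else σ₂ s) a c x z := by
  have hcont : ContinuousOn (fun s => if s ≤ b then σ₁ s else σ₂ s) (Icc a b ∪ Icc b c) :=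
    (h₁.2.1.congr fun s hs => if_pos hs.2).union_of_isClosed
      (h₂.2.1.congr (eqOn_glue_right h₁ h₂)) isClosed_Icc isClosed_Icc
  refine ⟨h₁.1.trans h₂.1, Icc_union_Icc_eq_Icc h₁.1 h₂.1 ▸ hcont, ?_, ?_, ?_⟩
  · simp only [h₁.1, if_true, h₁.2.2.1]
  · exact (eqOn_glue_right h₁ h₂ (right_mem_Icc.2 h₂.1)).trans h₂.2.2.2.1
  · rw [eVariationOn_glue h₁ h₂]
    exact ENNReal.add_ne_top.2 ⟨h₁.2.2.2.2, h₂.2.2.2.2⟩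

theorem exists_trans {a' b' : ℝ} (h₁ : IsCurveIn σ₁ a b x y) (h₂ : IsCurveIn σ₂ a' b' y z) :
    ∃ (τ : ℝ → Ω) (c d : ℝ), IsCurveIn τ c d x z ∧
      eVariationOn τ (Icc c d) = eVariationOn σ₁ (Icc a b) + eVariationOn σ₂ (Icc a' b') := by
  have h₂' := h₂.shift (b - a')
  rw [add_sub_cancel] at h₂'
  refine ⟨_, a, b' + (b - a'), h₁.glue h₂', ?_⟩
  rw [eVariationOn_glue h₁ h₂', ← eVariationOn_shift_Icc σ₂ a' b' (b - a'), add_sub_cancel]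

theorem qhEDist_le_qhLength (hσ : IsCurveIn σ a b x y) : qhEDist x y ≤ qhLength σ a b :=
  iInf_le_of_le σ (iInf_le_of_le a (iInf_le_of_le b (iInf_le _ hσ)))

end IsCurveIn

theorem arcLengthFun_measure_Icc_le {σ : ℝ → Ω} {a b : ℝ} (hab : a ≤ b)
    (hvar : eVariationOn σ (Icc a b) ≠ ⊤) :
    (arcLengthFun_monotone hab hvar).stieltjesFunction.measure (Icc a b) ≤
      eVariationOn σ (Icc a b) := by
  set f := arcLengthFun σ a b
  have hf : Monotone f := arcLengthFun_monotone hab hvar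
  have hfb : ∀ s, b ≤ s → f s = (eVariationOn σ (Icc a b)).toReal := fun s hs => by
    simp only [f, arcLengthFun, min_eq_right hs, max_eq_right hab]
  -- `f` is constant on `[b, ∞)` and nonnegative, which pins its Stieltjes function at `b`
  -- and bounds the left limit at `a` from below.
  have hgb : hf.stieltjesFunction b = (eVariationOn σ (Icc a b)).toReal := by
    rw [Monotone.stieltjesFunction_eq]
    exact le_antisymm ((hf.rightLim_le (lt_add_one b)).trans (hfb _ (by linarith)).le)
      ((hfb b le_rfl).symm.le.trans (hf.le_rightLim le_rfl))
  have hga : 0 ≤ Function.leftLim hf.stieltjesFunction a := by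
    refine le_trans ?_ (hf.stieltjesFunction.mono.le_leftLim (sub_one_lt a))
    rw [Monotone.stieltjesFunction_eq]
    exact ENNReal.toReal_nonneg.trans (hf.le_rightLim le_rfl)
  rw [StieltjesFunction.measure_Icc, hgb]
  exact (ENNReal.ofReal_le_ofReal (by linarith)).trans_eq (ENNReal.ofReal_toReal hvar)

theorem qhLength_le_of_le_deltaOmega {σ : ℝ → Ω} {a b c : ℝ} (hab : a ≤ b)
    (hvar : eVariationOn σ (Icc a b) ≠ ⊤) (hc : 0 < c)
    (hδ : ∀ s ∈ Icc a b, c ≤ deltaOmega (σ s)) :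
    qhLength σ a b ≤ ENNReal.ofReal (1 / c) * eVariationOn σ (Icc a b) := by
  rw [qhLength, dif_pos ⟨hab, hvar⟩]
  calc ∫⁻ s in Icc a b, ENNReal.ofReal (1 / deltaOmega (σ s))
        ∂(arcLengthFun_monotone hab hvar).stieltjesFunction.measure
      ≤ ∫⁻ _ in Icc a b, ENNReal.ofReal (1 / c)
        ∂(arcLengthFun_monotone hab hvar).stieltjesFunction.measure :=
        setLIntegral_mono' measurableSet_Icc fun s hs =>
          ENNReal.ofReal_le_ofReal (one_div_le_one_div_of_le hc (hδ s hs))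
    _ ≤ ENNReal.ofReal (1 / c) * eVariationOn σ (Icc a b) := by
        rw [setLIntegral_const]
        gcongr
        exact arcLengthFun_measure_Icc_le hab hvar

theorem IsCurveIn.qhDist_le {σ : ℝ → Ω} {a b c : ℝ} {x y : Ω} (hσ : IsCurveIn σ a b x y)
    (hc : 0 < c) (hδ : ∀ s ∈ Icc a b, c ≤ deltaOmega (σ s)) :
    qhDist x y ≤ (eVariationOn σ (Icc a b)).toReal / c := by
  have hvar := hσ.2.2.2.2
  have hle := hσ.qhEDist_le_qhLength.trans (qhLength_le_of_le_deltaOmega hσ.1 hvar hc hδ)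
  calc qhDist x y ≤ (ENNReal.ofReal (1 / c) * eVariationOn σ (Icc a b)).toReal :=
        ENNReal.toReal_mono (ENNReal.mul_ne_top ENNReal.ofReal_ne_top hvar) hle
    _ = (eVariationOn σ (Icc a b)).toReal / c := by
        rw [ENNReal.toReal_mul, ENNReal.toReal_ofReal (by positivity)]
        ring

theorem exists_isCurveIn_of_innerEDist_lt {x y : Ω} {ε : ℝ}
    (h : innerEDist x y < ENNReal.ofReal ε) :
    ∃ (σ : ℝ → Ω) (a b : ℝ), IsCurveIn σ a b x y ∧ (eVariationOn σ (Icc a b)).toReal < ε := by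
  simp only [innerEDist, iInf_lt_iff, exists_prop] at h
  obtain ⟨σ, a, b, hσ, hlt⟩ := h
  exact ⟨σ, a, b, hσ, ENNReal.toReal_lt_of_lt_ofReal hlt⟩

theorem MinimallyNice.exists_nhds_qhDist_le_one (hnice : MinimallyNice Ω) (z : Ω) :
    ∃ U ∈ 𝓝 z, ∀ y₁ ∈ U, ∀ y₂ ∈ U, qhDist y₁ y₂ ≤ 1 := by
  have := hnice.locallyCompact
  set r := deltaOmega z
  have hr : 0 < r := deltaOmega_pos hnice.nonComplete z
  refine ⟨{y | innerEDist z y < ENNReal.ofReal (r / 8)},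
    (hnice.idContinuous z).eventually (gt_mem_nhds (ENNReal.ofReal_pos.2 (by positivity))), ?_⟩
  intro y₁ h₁ y₂ h₂
  obtain ⟨σ₁, a₁, b₁, hσ₁, hv₁⟩ := exists_isCurveIn_of_innerEDist_lt h₁
  obtain ⟨σ₂, a₂, b₂, hσ₂, hv₂⟩ := exists_isCurveIn_of_innerEDist_lt h₂
  obtain ⟨τ, a, b, hτ, hvτ⟩ := hσ₁.reverse.exists_trans hσ₂
  rw [eVariationOn_reverse_Icc] at hvτ
  have hℓ : (eVariationOn τ (Icc a b)).toReal < r / 4 := by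
    rw [hvτ, ENNReal.toReal_add hσ₁.2.2.2.2 hσ₂.2.2.2.2]
    linarith
  have hδ : ∀ s ∈ Icc a b, r / 2 ≤ deltaOmega (τ s) := by
    intro s hs
    -- `τ s` lies within `r / 4 + r / 8` of `z`
    have hy₁ : dist y₁ z ≤ (eVariationOn σ₁ (Icc a₁ b₁)).toReal :=
      hσ₁.2.2.2.1 ▸ hσ₁.dist_le (right_mem_Icc.2 hσ₁.1)
    linarith [hτ.dist_le hs, deltaOmega_le_add_dist z (τ s), dist_triangle (τ s) y₁ z,
      dist_comm z (τ s)]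
  calc qhDist y₁ y₂ ≤ (eVariationOn τ (Icc a b)).toReal / (r / 2) :=
        hτ.qhDist_le (by positivity) hδ
    _ ≤ 1 := by
        rw [div_le_one (by positivity)]
        linarith

namespace IsQHGeodesicRay

variable {γ : ℝ → Ω}

theorem not_mapClusterPt (hnice : MinimallyNice Ω) (hγ : IsQHGeodesicRay γ) (z : Ω) :
    ¬ MapClusterPt z atTop γ := by
  intro hz
  obtain ⟨U, hU, hUq⟩ := hnice.exists_nhds_qhDist_le_one z
  have hfreq : ∃ᶠ s in atTop, γ s ∈ U := hz.frequently hU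
  obtain ⟨s₀, hs₀U, hs₀⟩ := (hfreq.and_eventually (eventually_ge_atTop 0)).exists
  obtain ⟨s₁, hs₁U, hs₁⟩ := (hfreq.and_eventually (eventually_ge_atTop (s₀ + 2))).exists
  have h := hUq _ hs₀U _ hs₁U
  rw [hγ (mem_Ici.2 hs₀) (mem_Ici.2 (by linarith)), abs_sub_comm,
    abs_of_nonneg (by linarith)] at h
  linarith

theorem tendsto_cocompact (hnice : MinimallyNice Ω) (hγ : IsQHGeodesicRay γ) :
    Tendsto γ atTop (cocompact Ω) := by
  refine hasBasis_cocompact.tendsto_right_iff.2 fun K hK => ?_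
  by_contra h
  rw [not_eventually] at h
  simp only [mem_compl_iff, not_not] at h
  obtain ⟨z, -, hz⟩ := hK.exists_mapClusterPt_of_frequently h
  exact hγ.not_mapClusterPt hnice z hz

theorem mem_metricBoundary_of_tendsto (hnice : MinimallyNice Ω) (hγ : IsQHGeodesicRay γ)
    {u : ℕ → ℝ} (hu : Tendsto u atTop atTop) {p : Completion Ω}
    (hp : Tendsto (fun n => (γ (u n) : Completion Ω)) atTop (𝓝 p)) : p ∈ metricBoundary Ω := by
  rintro ⟨z, rfl⟩
  have hz : Tendsto (γ ∘ u) atTop (𝓝 z) :=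
    (Completion.isUniformInducing_coe Ω).isInducing.tendsto_nhds_iff.2 hp
  exact hγ.not_mapClusterPt hnice z (hz.mapClusterPt.of_comp hu)

theorem exists_isQHGeodesicSeg (hγ : IsQHGeodesicRay γ) {u v : ℝ} (hu : 0 ≤ u) (hv : 0 ≤ v) :
    ∃ (σ : ℝ → Ω) (a b : ℝ), IsQHGeodesicSeg σ a b (γ u) (γ v) ∧
      σ '' Icc a b ⊆ γ '' Ici (min u v) := by
  rcases le_total u v with huv | hvu
  · refine ⟨γ, u, v, ⟨huv, rfl, rfl, fun s hs s' hs' => hγ (hu.trans hs.1) (hu.trans hs'.1)⟩, ?_⟩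
    rw [min_eq_left huv]
    exact image_mono Icc_subset_Ici_self
  · refine ⟨fun s => γ (u + v - s), v, u, ⟨hvu, by simp, by simp, fun s hs s' hs' => ?_⟩, ?_⟩
    · rw [hγ (mem_Ici.2 (by linarith [hs.2])) (mem_Ici.2 (by linarith [hs'.2])), ← abs_neg]
      congr 1
      ring
    · rintro _ ⟨s, hs, rfl⟩
      exact ⟨u + v - s, by rw [min_eq_right hvu, mem_Ici]; linarith [hs.2], rfl⟩

theorem eq_of_tendsto (hnice : MinimallyNice Ω) (hvis : QHVisible Ω) (hγ : IsQHGeodesicRay γ)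
    {u v : ℕ → ℝ} (hu : Tendsto u atTop atTop) (hv : Tendsto v atTop atTop)
    {p q : Completion Ω} (hp : Tendsto (fun n => (γ (u n) : Completion Ω)) atTop (𝓝 p))
    (hq : Tendsto (fun n => (γ (v n) : Completion Ω)) atTop (𝓝 q)) : p = q := by
  by_contra hpq
  obtain ⟨K, hK, hKvis⟩ := hvis p q (hγ.mem_metricBoundary_of_tendsto hnice hu hp)
    (hγ.mem_metricBoundary_of_tendsto hnice hv hq) hpq
  obtain ⟨T, hT⟩ := eventually_atTop.1
    ((hγ.tendsto_cocompact hnice).eventually hK.compl_mem_cocompact)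
  obtain ⟨n, hun, hvn⟩ :=
    ((hu.eventually_ge_atTop (max T 0)).and (hv.eventually_ge_atTop (max T 0))).exists
  obtain ⟨σ, a, b, hσ, hσγ⟩ :=
    hγ.exists_isQHGeodesicSeg (le_of_max_le_right hun) (le_of_max_le_right hvn)
  obtain ⟨s, hs, hsK⟩ := hKvis (fun n => γ (u n)) (fun n => γ (v n)) hp hq n σ a b hσ
  obtain ⟨r, hr, hrs⟩ := hσγ (mem_image_of_mem σ hs)
  refine hT r ((le_min (le_of_max_le_left hun) (le_of_max_le_left hvn)).trans hr) ?_
  rwa [hrs]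

end IsQHGeodesicRay

theorem qhGeodesicRay_limit_exists_along_sequences_general
    {Ω : Type*} [MetricSpace Ω]
    (hnice : MinimallyNice Ω)
    (hcpt : CompactSpace (UniformSpace.Completion Ω))
    (hvis : QHVisible Ω)
    (γ : ℝ → Ω) (hγ : IsQHGeodesicRay γ)
    (t : ℕ → ℝ) (ht : Filter.Tendsto t Filter.atTop Filter.atTop) :
    ∃ x ∈ metricBoundary Ω,
      Filter.Tendsto (fun n => ((γ (t n) : Ω) : UniformSpace.Completion Ω))
        Filter.atTop (nhds x) := by
  obtain ⟨p, φ, hφ, hp⟩ := CompactSpace.tendsto_subseq fun n => (γ (t n) : Completion Ω)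
  have htφ := ht.comp hφ.tendsto_atTop
  refine ⟨p, hγ.mem_metricBoundary_of_tendsto hnice htφ hp,
    tendsto_of_subseq_tendsto fun ns hns => ?_⟩
  obtain ⟨q, ψ, hψ, hq⟩ := CompactSpace.tendsto_subseq fun n => (γ (t (ns n)) : Completion Ω)
  refine ⟨ψ, ?_⟩
  rwa [hγ.eq_of_tendsto hnice hvis htφ (ht.comp (hns.comp hψ.tendsto_atTop)) hp hq]

/-- **Lemma 4.2.**  Let `(Ω,d)` be a bounded minimally nice space with compact metric
completion, and suppose `(Ω,d)` is quasihyperbolically visible.  If `γ` is a quasihyperbolic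
geodesic ray in `Ω`, then for every sequence `tₙ → ∞` the limit `lim γ(tₙ)` exists in the
metric `d` (and lies in `∂_dΩ`). -/
theorem qhGeodesicRay_limit_exists_along_sequences
    {Ω : Type*} [MetricSpace Ω]
    (hnice : MinimallyNice Ω)
    (hbdd : Bornology.IsBounded (Set.univ : Set Ω))
    (hcpt : CompactSpace (UniformSpace.Completion Ω))
    (hvis : QHVisible Ω)
    (γ : ℝ → Ω) (hγ : IsQHGeodesicRay γ)
    (t : ℕ → ℝ) (ht : Filter.Tendsto t Filter.atTop Filter.atTop) :
    ∃ x ∈ metricBoundary Ω,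
      Filter.Tendsto (fun n => ((γ (t n) : Ω) : UniformSpace.Completion Ω))
        Filter.atTop (nhds x) :=
  qhGeodesicRay_limit_exists_along_sequences_general hnice hcpt hvis γ hγ t ht
end
end

section
/- Let (Ω,d) be a bounded minimally nice metric space that is quasiconvex and in which the Gehring–Hayman theorem holds. Let Γ : (−∞,∞) → (Ω,k_Ω) be a quasihyperbolic geodesic line such that both limits p = lim_{t→∞} Γ(t) and q = lim_{t→−∞} Γ(t) exist (in the metric d) and lie in ∂_dΩ. Then p ≠ q. -/
open Set Filter Metric Topology UniformConvergence ENNReal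

noncomputable section

variable {Ω : Type*} [MetricSpace Ω]

/-- **Injectivity step in the proof of Theorem Main-1.**  Let `(Ω,d)` be a bounded minimally
nice quasiconvex space in which the Gehring–Hayman theorem holds, and let
`Γ : (-∞,∞) → (Ω,k_Ω)` be a quasihyperbolic geodesic line whose two ends `d`-converge to
points `p,q` of the metric boundary.  Then `p ≠ q`. -/
theorem qhGeodesicLine_distinct_endpoints
    {Ω : Type*} [MetricSpace Ω]
    (hnice : MinimallyNice Ω)
    (hbdd : Bornology.IsBounded (Set.univ : Set Ω))
    (hqc : QuasiconvexSpace Ω)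
    (hgh : GehringHayman Ω)
    (Γ : ℝ → Ω) (hΓ : IsQHGeodesicLine Γ)
    (p q : UniformSpace.Completion Ω)
    (hpmem : p ∈ metricBoundary Ω) (hqmem : q ∈ metricBoundary Ω)
    (hp : Filter.Tendsto (fun t : ℝ => ((Γ t : Ω) : UniformSpace.Completion Ω))
      Filter.atTop (nhds p))
    (hq : Filter.Tendsto (fun t : ℝ => ((Γ t : Ω) : UniformSpace.Completion Ω))
      Filter.atBot (nhds q)) :
    p ≠ q := by
  intro hpq
  obtain ⟨A, hA1, hA⟩ := hqc
  obtain ⟨C, hC1, hC⟩ := hgh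
  have hCA : (0:ℝ) < C * A := by positivity
  have key : ∀ ε : ℝ, 0 < ε → dist (Γ 0) (Γ 1) ≤ C * (A * ε) := by
    intro ε hε
    have hp' : ∀ᶠ t in Filter.atTop,
        dist ((Γ t : Ω) : UniformSpace.Completion Ω) p < ε / 2 :=
      (Metric.tendsto_nhds.mp hp) (ε/2) (by positivity)
    have hq' : ∀ᶠ t in Filter.atBot,
        dist ((Γ t : Ω) : UniformSpace.Completion Ω) q < ε / 2 :=
      (Metric.tendsto_nhds.mp hq) (ε/2) (by positivity)
    obtain ⟨t, ht, ht1⟩ := (hp'.and (Filter.eventually_ge_atTop 1)).exists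
    obtain ⟨s, hs, hs0⟩ := (hq'.and (Filter.eventually_le_atBot 0)).exists
    have hst : s ≤ t := hs0.trans (le_trans zero_le_one ht1)
    have hdst : dist (Γ s) (Γ t) < ε := by
      have h1 : dist ((Γ s : Ω) : UniformSpace.Completion Ω)
          ((Γ t : Ω) : UniformSpace.Completion Ω) < ε := by
        calc dist ((Γ s : Ω) : UniformSpace.Completion Ω)
              ((Γ t : Ω) : UniformSpace.Completion Ω)
            ≤ dist ((Γ s : Ω) : UniformSpace.Completion Ω) q +
              dist ((Γ t : Ω) : UniformSpace.Completion Ω) p := by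
              rw [hpq]; exact dist_triangle_right _ _ _
          _ < ε/2 + ε/2 := add_lt_add hs ht
          _ = ε := by ring
      rwa [UniformSpace.Completion.dist_eq] at h1
    obtain ⟨σ, a', b', hσ, hσlen⟩ := hA (Γ s) (Γ t)
    have hgeo : IsQHGeodesicSeg Γ s t (Γ s) (Γ t) :=
      ⟨hst, rfl, rfl, fun u _ v _ => hΓ (Set.mem_univ u) (Set.mem_univ v)⟩
    have hGH := hC (Γ s) (Γ t) Γ s t hgeo σ a' b' hσ
    have h01 : edist (Γ 0) (Γ 1) ≤ eVariationOn Γ (Set.Icc s t) :=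
      eVariationOn.edist_le Γ ⟨hs0, le_trans zero_le_one ht1⟩ ⟨hs0.trans zero_le_one, ht1⟩
    have hfinal : edist (Γ 0) (Γ 1) ≤ ENNReal.ofReal (C * (A * ε)) := by
      calc edist (Γ 0) (Γ 1) ≤ eVariationOn Γ (Set.Icc s t) := h01
        _ ≤ ENNReal.ofReal C * eVariationOn σ (Set.Icc a' b') := hGH
        _ ≤ ENNReal.ofReal C * ENNReal.ofReal (A * dist (Γ s) (Γ t)) :=
            mul_le_mul_right hσlen _
        _ = ENNReal.ofReal (C * (A * dist (Γ s) (Γ t))) := by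
            rw [ENNReal.ofReal_mul (by linarith : (0:ℝ) ≤ C)]
        _ ≤ ENNReal.ofReal (C * (A * ε)) := by
            apply ENNReal.ofReal_le_ofReal
            have := hdst.le
            nlinarith [dist_nonneg (x := Γ s) (y := Γ t)]
    exact (edist_le_ofReal (by positivity)).mp hfinal
  have hdist0 : Γ 0 = Γ 1 := by
    apply eq_of_dist_eq_zero
    by_contra h
    have hd : 0 < dist (Γ 0) (Γ 1) := lt_of_le_of_ne dist_nonneg (Ne.symm h)
    have := key (dist (Γ 0) (Γ 1) / (2 * (C * A))) (by positivity)
    have h2 : C * (A * (dist (Γ 0) (Γ 1) / (2 * (C * A)))) = dist (Γ 0) (Γ 1) / 2 := by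
      field_simp
    rw [h2] at this
    linarith
  have h1 := hΓ (Set.mem_univ (0:ℝ)) (Set.mem_univ (1:ℝ))
  have h0 := hΓ (Set.mem_univ (1:ℝ)) (Set.mem_univ (1:ℝ))
  rw [hdist0] at h1
  rw [h1] at h0
  norm_num at h0
end
end

section
/- Let Ω = (0,1)×(0,1) \ ⋃_{j=1}^∞ ({1/2^j} × [0,1/2]) ⊂ ℝ², equipped with the inner length metric λ_Ω induced by the Euclidean metric, and for each j ∈ ℕ let x_j = (3/2^{j+2}, 0), regarded as a point of the metric boundary ∂_IΩ of (Ω,λ_Ω). Then λ_Ω(x_j, x_{j+1}) ≥ 1 for every j ∈ ℕ; consequently the sequence (x_j) has no convergent subsequence in (∂_IΩ, λ_Ω), so the metric boundary ∂_IΩ is closed and bounded but not compact. -/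
open Set Filter Metric Topology ENNReal

noncomputable section

/-- The domain `Ω = (0,1)×(0,1) \ ⋃_{j≥1} ({1/2ʲ} × [0,1/2])` in the Euclidean plane. -/
def slitSquare : Set (EuclideanSpace ℝ (Fin 2)) :=
  {p | p 0 ∈ Ioo (0:ℝ) 1 ∧ p 1 ∈ Ioo (0:ℝ) 1} \
    ⋃ j : ℕ, {p | p 0 = 1 / 2 ^ (j + 1) ∧ p 1 ∈ Icc (0:ℝ) (1/2)}

/-- The boundary points `x_j = (3/2^{j+2}, 0)`. -/
def slitMidpoint (j : ℕ) : EuclideanSpace ℝ (Fin 2) :=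
  (EuclideanSpace.equiv (Fin 2) ℝ).symm ![3 / 2 ^ (j + 2), 0]

/-- The inner length (pseudo)distance of `slitSquare`: the infimum of the Euclidean lengths
of curves joining `p` to `q` inside `slitSquare`. -/
def innerEDistSlit (p q : EuclideanSpace ℝ (Fin 2)) : ℝ≥0∞ :=
  ⨅ (γ : ℝ → EuclideanSpace ℝ (Fin 2)) (a : ℝ) (b : ℝ)
    (_ : a ≤ b ∧ ContinuousOn γ (Icc a b) ∧ γ a = p ∧ γ b = q ∧
      Set.MapsTo γ (Icc a b) slitSquare),
    eVariationOn γ (Icc a b)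

/-!
A curve in `Ω` from a point right of the slit `{2⁻⁽ᵏ⁺¹⁾} × [0, 1/2]` to a point left of it
crosses the line `x = 2⁻⁽ᵏ⁺¹⁾`, and it can only do so above the slit, at height `> 1/2`.
Climbing there and coming back down costs at least `(1/2 - p₁) + (1/2 - q₁)`. For `i < j` the
points `x_i` and `x_j` lie at height `0` on opposite sides of the slit at `2⁻⁽ⁱ⁺¹⁾`, so curves
in `Ω` joining points near them have length at least nearly `1`.
-/

theorem eVariationOn.edist_add_edist_le {α E : Type*} [LinearOrder α] [PseudoEMetricSpace E]
    (f : α → E) {a t b : α} (hat : a ≤ t) (htb : t ≤ b) :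
    edist (f a) (f t) + edist (f t) (f b) ≤ eVariationOn f (Icc a b) :=
  calc edist (f a) (f t) + edist (f t) (f b)
      ≤ eVariationOn f (Icc a t) + eVariationOn f (Icc t b) :=
        add_le_add (eVariationOn.edist_le f (left_mem_Icc.2 hat) (right_mem_Icc.2 hat))
          (eVariationOn.edist_le f (left_mem_Icc.2 htb) (right_mem_Icc.2 htb))
    _ = eVariationOn f (Icc a b) := by
        simpa using eVariationOn.Icc_add_Icc f (s := univ) hat htb (mem_univ t)

@[simp]
lemma slitMidpoint_apply_zero (j : ℕ) : slitMidpoint j 0 = 3 / 2 ^ (j + 2) := rfl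

@[simp]
lemma slitMidpoint_apply_one (j : ℕ) : slitMidpoint j 1 = 0 := rfl

lemma slit_lt_slitMidpoint_apply_zero (i : ℕ) : 1 / 2 ^ (i + 1) < slitMidpoint i 0 := by
  rw [slitMidpoint_apply_zero, pow_succ 2 (i + 1), div_lt_div_iff₀ (by positivity) (by positivity)]
  nlinarith [pow_pos (two_pos : (0 : ℝ) < 2) (i + 1)]

lemma slitMidpoint_apply_zero_lt_slit {i j : ℕ} (hij : i < j) :
    slitMidpoint j 0 < 1 / 2 ^ (i + 1) :=
  calc slitMidpoint j 0 = 3 / 2 ^ (j + 2) := rfl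
    _ ≤ 3 / 2 ^ (i + 3) :=
      div_le_div_of_nonneg_left (by norm_num) (by positivity)
        (pow_le_pow_right₀ one_le_two (by omega))
    _ < 1 / 2 ^ (i + 1) := by
      rw [pow_add 2 (i + 1) 2, div_lt_div_iff₀ (by positivity) (by positivity)]
      nlinarith [pow_pos (two_pos : (0 : ℝ) < 2) (i + 1)]

lemma half_lt_apply_one_of_mem_slitSquare {p : EuclideanSpace ℝ (Fin 2)} (hp : p ∈ slitSquare)
    {k : ℕ} (hk : p 0 = 1 / 2 ^ (k + 1)) : 1 / 2 < p 1 := by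
  obtain ⟨⟨-, hp1⟩, hslit⟩ := hp
  by_contra! hle
  exact hslit (mem_iUnion.2 ⟨k, hk, hp1.1.le, hle⟩)

lemma ofReal_add_le_innerEDistSlit {k : ℕ} {p q : EuclideanSpace ℝ (Fin 2)}
    (hp : 1 / 2 ^ (k + 1) < p 0) (hq : q 0 < 1 / 2 ^ (k + 1)) :
    ENNReal.ofReal ((1 / 2 - p 1) + (1 / 2 - q 1)) ≤ innerEDistSlit p q := by
  simp only [innerEDistSlit, le_iInf_iff]
  rintro γ a b ⟨hab, hγ, rfl, rfl, hmaps⟩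
  obtain ⟨t, ht, hγt⟩ : ∃ t ∈ Icc a b, γ t 0 = 1 / 2 ^ (k + 1) :=
    intermediate_value_Icc' hab ((PiLp.continuous_apply 2 _ 0).comp_continuousOn hγ)
      ⟨hq.le, hp.le⟩
  have hhigh := half_lt_apply_one_of_mem_slitSquare (hmaps ht) hγt
  have hclimb (x : EuclideanSpace ℝ (Fin 2)) : ENNReal.ofReal (1 / 2 - x 1) ≤ edist x (γ t) :=
    calc ENNReal.ofReal (1 / 2 - x 1) ≤ ENNReal.ofReal (dist (x 1) (γ t 1)) := by
          gcongr
          rw [Real.dist_eq]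
          linarith [neg_abs_le (x 1 - γ t 1)]
      _ ≤ edist x (γ t) := by
          rw [← edist_dist]
          exact PiLp.edist_apply_le _ _ 1
  calc ENNReal.ofReal ((1 / 2 - γ a 1) + (1 / 2 - γ b 1))
      ≤ ENNReal.ofReal (1 / 2 - γ a 1) + ENNReal.ofReal (1 / 2 - γ b 1) := ofReal_add_le
    _ ≤ edist (γ a) (γ t) + edist (γ t) (γ b) := by
        rw [edist_comm (γ t)]
        exact add_le_add (hclimb _) (hclimb _)
    _ ≤ eVariationOn γ (Icc a b) := eVariationOn.edist_add_edist_le γ ht.1 ht.2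

lemma le_liminf_innerEDistSlit {ι : Type*} {l : Filter ι} [l.NeBot] {k : ℕ}
    {x y : EuclideanSpace ℝ (Fin 2)} (hx : 1 / 2 ^ (k + 1) < x 0) (hy : y 0 < 1 / 2 ^ (k + 1))
    {u v : ι → EuclideanSpace ℝ (Fin 2)} (hu : Tendsto u l (𝓝 x)) (hv : Tendsto v l (𝓝 y)) :
    ENNReal.ofReal ((1 / 2 - x 1) + (1 / 2 - y 1)) ≤
      liminf (fun n => innerEDistSlit (u n) (v n)) l := by
  have hcoord (i : Fin 2) {w : ι → EuclideanSpace ℝ (Fin 2)} {z : EuclideanSpace ℝ (Fin 2)}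
      (hw : Tendsto w l (𝓝 z)) : Tendsto (fun n => w n i) l (𝓝 (z i)) :=
    ((PiLp.continuous_apply 2 _ i).tendsto z).comp hw
  have hbound := ENNReal.tendsto_ofReal
    (((hcoord 1 hu).const_sub (1 / 2)).add ((hcoord 1 hv).const_sub (1 / 2)))
  rw [← hbound.liminf_eq]
  refine liminf_le_liminf ?_
  filter_upwards [(hcoord 0 hu).eventually (eventually_gt_nhds hx),
    (hcoord 0 hv).eventually (eventually_lt_nhds hy)] with n hun hvn
  exact ofReal_add_le_innerEDistSlit hun hvn

lemma one_le_liminf_innerEDistSlit_slitMidpoint {i j : ℕ} (hij : i < j)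
    {u v : ℕ → EuclideanSpace ℝ (Fin 2)} (hu : Tendsto u atTop (𝓝 (slitMidpoint i)))
    (hv : Tendsto v atTop (𝓝 (slitMidpoint j))) :
    1 ≤ liminf (fun n => innerEDistSlit (u n) (v n)) atTop := by
  simpa [← two_mul] using le_liminf_innerEDistSlit (slit_lt_slitMidpoint_apply_zero i)
    (slitMidpoint_apply_zero_lt_slit hij) hu hv

/-- **Example (non-compact inner boundary).**  For the slit square `Ω`, the boundary points
`x_j = (3/2^{j+2},0)` of the inner metric satisfy `λ_Ω(x_j, x_{j+1}) ≥ 1`; indeed any two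
distinct such boundary points are at inner distance at least `1`, expressed here via
approximating sequences in `Ω`.  Consequently `(x_j)` has no convergent subsequence in the
metric boundary of `(Ω, λ_Ω)`, which is therefore closed and bounded but not compact. -/
theorem slitSquare_inner_boundary_separated :
    (∀ j : ℕ, 1 ≤ j →
      ∀ u v : ℕ → EuclideanSpace ℝ (Fin 2),
        (∀ n, u n ∈ slitSquare) → (∀ n, v n ∈ slitSquare) →
        Tendsto u atTop (nhds (slitMidpoint j)) →
        Tendsto v atTop (nhds (slitMidpoint (j + 1))) →
        (1 : ℝ≥0∞) ≤ Filter.liminf (fun n => innerEDistSlit (u n) (v n)) Filter.atTop)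
    ∧
    (∀ i j : ℕ, 1 ≤ i → i < j →
      ∀ u v : ℕ → EuclideanSpace ℝ (Fin 2),
        (∀ n, u n ∈ slitSquare) → (∀ n, v n ∈ slitSquare) →
        Tendsto u atTop (nhds (slitMidpoint i)) →
        Tendsto v atTop (nhds (slitMidpoint j)) →
        (1 : ℝ≥0∞) ≤ Filter.liminf (fun n => innerEDistSlit (u n) (v n)) Filter.atTop) :=
  ⟨fun j _ _ _ _ _ hu hv => one_le_liminf_innerEDistSlit_slitMidpoint j.lt_succ_self hu hv,
   fun _ _ _ hij _ _ _ _ hu hv => one_le_liminf_innerEDistSlit_slitMidpoint hij hu hv⟩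
end
end
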